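/- For every n ≥ 0, let Q_n be the grid graph on vertex set [0, n]² ⊆ ℤ². Let v = (v_n)_{n≥0} be a valid activator sequence with v₀ = (0,0), with v₁ = • or v₂ = •, and such that for every n ≥ 1 with v_n ≠ •, the vertex v_n is chosen among the vertices of Q_n not in N_{Q_n}[B_{n−1}] to have minimum L1-distance to (0,0), and among those, to have the greatest y-coordinate. Then for all n ≥ 1, |B_n| ≤ (n+2)(n+1)/2 + (2 + log₂ n)(n+1). -/

import Mathlib

open Filter Topology

namespace Burning

/-- Points of the `d`-dimensional integer lattice. -/
abbrev Pt (d : ℕ) := Fin d → ℤ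

/-- The `L1`-distance between two lattice points. -/
def dist1 {d : ℕ} (x y : Pt d) : ℤ := ∑ i, |x i - y i|

/-- The `L1`-norm of a lattice point. -/
def norm1 {d : ℕ} (x : Pt d) : ℤ := ∑ i, |x i|

/-- The closed neighbourhood of the set `B` in the grid graph on the vertex set `Vn`
(two vertices adjacent iff at `L1`-distance `1`). -/
def nbhd {d : ℕ} (Vn : Set (Pt d)) (B : Set (Pt d)) : Set (Pt d) :=
  B ∪ {x | x ∈ Vn ∧ ∃ b ∈ B, dist1 x b = 1}

/-- The burned sets of the activator sequence `v` in the sequence of grid graphs on the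
vertex sets `V n`; `v n = none` means no vertex is activated at time `n` (the symbol `•`). -/
def burnSet {d : ℕ} (V : ℕ → Set (Pt d)) (v : ℕ → Option (Pt d)) : ℕ → Set (Pt d)
  | 0 => (v 0).elim ∅ (fun x => {x})
  | n + 1 => nbhd (V (n + 1)) (burnSet V v n) ∪ (v (n + 1)).elim ∅ (fun x => {x})

/-- `v` is an activator sequence for the vertex sets `V`: every activated vertex is a
vertex of the current graph. -/
def IsActivator {d : ℕ} (V : ℕ → Set (Pt d)) (v : ℕ → Option (Pt d)) : Prop :=
  ∀ n x, v n = some x → x ∈ V n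

/-- `v` is a valid activator sequence: each newly activated vertex lies in the current
vertex set and is not already burned at the current step. -/
def IsValid {d : ℕ} (V : ℕ → Set (Pt d)) (v : ℕ → Option (Pt d)) : Prop :=
  ∀ n x, v (n + 1) = some x →
    x ∈ V (n + 1) ∧ x ∉ nbhd (V (n + 1)) (burnSet V v n)

/-- The proportion of burned vertices at time `n`. -/
noncomputable def densitySeq {d : ℕ} (V : ℕ → Set (Pt d)) (v : ℕ → Option (Pt d))
    (n : ℕ) : ℝ :=
  ((burnSet V v n).ncard : ℝ) / ((V n).ncard : ℝ)

/-- The closed `L1`-ball of radius `r` centred at `P`. -/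
def ball1 {d : ℕ} (P : Pt d) (r : ℤ) : Set (Pt d) := {x | norm1 (x - P) ≤ r}

/-- The `L1`-sphere of radius `r` centred at `P`. -/
def sphere1 {d : ℕ} (P : Pt d) (r : ℤ) : Set (Pt d) := {x | norm1 (x - P) = r}

/-- The square grid `[-a, a]² ⊆ ℤ²`. -/
def sqGrid (a : ℤ) : Set (Pt 2) := {x | ∀ i, |x i| ≤ a}

/-- The cube grid `[-a, a]^d ⊆ ℤ^d`. -/
def cubeGrid (d : ℕ) (a : ℤ) : Set (Pt d) := {x | ∀ i, |x i| ≤ a}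

/-- The quadrant grid `[0, a]² ⊆ ℤ²`. -/
def quadGrid (a : ℤ) : Set (Pt 2) := {x | ∀ i, 0 ≤ x i ∧ x i ≤ a}

end Burning

namespace Burning

lemma pt_ext {p q : Pt 2} (h0 : p 0 = q 0) (h1 : p 1 = q 1) : p = q := by
  funext i; fin_cases i <;> assumption

lemma norm1_two (p : Pt 2) : norm1 p = |p 0| + |p 1| := by
  simp [norm1, Fin.sum_univ_two]

lemma dist1_two (p q : Pt 2) : dist1 p q = |p 0 - q 0| + |p 1 - q 1| := by
  simp [dist1, Fin.sum_univ_two]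

lemma adj_cases {x b : Pt 2} (h : dist1 x b = 1) :
    (b 0 = x 0 + 1 ∧ b 1 = x 1) ∨ (b 0 = x 0 - 1 ∧ b 1 = x 1) ∨
    (b 0 = x 0 ∧ b 1 = x 1 + 1) ∨ (b 0 = x 0 ∧ b 1 = x 1 - 1) := by
  rw [dist1_two] at h
  obtain ⟨h1, s1⟩ | ⟨h1, s1⟩ := abs_cases (x 0 - b 0) <;>
    obtain ⟨h2, s2⟩ | ⟨h2, s2⟩ := abs_cases (x 1 - b 1) <;>
      rw [h1, h2] at h <;> omega

lemma mem_quad {a : ℤ} {p : Pt 2} :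
    p ∈ quadGrid a ↔ (0 ≤ p 0 ∧ p 0 ≤ a) ∧ (0 ≤ p 1 ∧ p 1 ≤ a) := by
  constructor
  · intro h; exact ⟨h 0, h 1⟩
  · rintro ⟨h0, h1⟩ i; fin_cases i <;> assumption

lemma quad_mono {a b : ℤ} (h : a ≤ b) : quadGrid a ⊆ quadGrid b := by
  intro p hp i
  exact ⟨(hp i).1, (hp i).2.trans h⟩

lemma norm1_of_quad {a : ℤ} {p : Pt 2} (hp : p ∈ quadGrid a) :
    norm1 p = p 0 + p 1 := by
  rw [norm1_two, abs_of_nonneg (hp 0).1, abs_of_nonneg (hp 1).1]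

end Burning

namespace Burning

variable {V : ℕ → Set (Pt 2)} {v : ℕ → Option (Pt 2)}

lemma burnSet_zero (hv0 : v 0 = some 0) : burnSet V v 0 = {(0 : Pt 2)} := by
  simp [burnSet, hv0]

lemma burnSet_succ (t : ℕ) :
    burnSet V v (t + 1) = nbhd (V (t + 1)) (burnSet V v t) ∪ (v (t + 1)).elim ∅ (fun x => {x}) :=
  rfl

lemma burn_sub (hV : ∀ n : ℕ, V n = quadGrid n) (hact : IsActivator V v)
    (hv0 : v 0 = some 0) : ∀ t : ℕ, burnSet V v t ⊆ quadGrid t := by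
  intro t
  induction t with
  | zero =>
      rw [burnSet_zero hv0]
      rintro p rfl i
      simp
  | succ t ih =>
      rw [burnSet_succ]
      rintro p (hp | hp)
      · rcases hp with hp | ⟨hpV, _⟩
        · exact quad_mono (by exact_mod_cast Nat.le_succ t) (ih hp)
        · rw [hV] at hpV; exact hpV
      · rcases hv : v (t + 1) with _ | a
        · rw [hv] at hp; simp at hp
        · rw [hv] at hp; simp at hp
          subst hp
          have := hact _ _ hv
          rw [hV] at this; exact this

/-- Norm bound for the neighbourhood. -/
lemma nbhd_bound {t : ℕ} {M : ℤ} (hA : ∀ p ∈ burnSet V v t, p 0 + p 1 ≤ M) :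
    ∀ q ∈ nbhd (V (t + 1)) (burnSet V v t), q 0 + q 1 ≤ M + 1 := by
  rintro q (hq | ⟨-, b, hb, hd⟩)
  · have := hA q hq; omega
  · have hbA := hA b hb
    rcases adj_cases hd with ⟨h0, h1⟩ | ⟨h0, h1⟩ | ⟨h0, h1⟩ | ⟨h0, h1⟩ <;> omega

/-- Top-diagonal structure for the neighbourhood. -/
lemma nbhd_top {t : ℕ} {M : ℤ} (hA : ∀ p ∈ burnSet V v t, p 0 + p 1 ≤ M) :
    ∀ q ∈ nbhd (V (t + 1)) (burnSet V v t), q 0 + q 1 = M + 1 →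
      ∃ b ∈ burnSet V v t, b 0 + b 1 = M ∧ q 0 ≤ b 0 + 1 := by
  rintro q (hq | ⟨-, b, hb, hd⟩) hqs
  · have := hA q hq; omega
  · have hbA := hA b hb
    refine ⟨b, hb, ?_⟩
    rcases adj_cases hd with ⟨h0, h1⟩ | ⟨h0, h1⟩ | ⟨h0, h1⟩ | ⟨h0, h1⟩ <;> omega

end Burning

namespace Burning

lemma invariant (V : ℕ → Set (Pt 2)) (hV : ∀ n : ℕ, V n = quadGrid n)
    (v : ℕ → Option (Pt 2))
    (hact : IsActivator V v) (hv0 : v 0 = some 0)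
    (hskip : v 1 = none ∨ v 2 = none)
    (hnearest : ∀ n : ℕ, ∀ x, v (n + 1) = some x →
      ∀ y ∈ V (n + 1), y ∉ nbhd (V (n + 1)) (burnSet V v n) →
        norm1 x < norm1 y ∨ (norm1 x = norm1 y ∧ y 1 ≤ x 1)) :
    ∀ t : ℕ, ∃ e m : ℕ, e ≤ m ∧ m ≤ t ∧
      (∀ p ∈ burnSet V v t, p 0 + p 1 ≤ (t : ℤ) + e) ∧
      (∀ p ∈ burnSet V v t, p 0 + p 1 = (t : ℤ) + e → p 0 ≤ (e : ℤ) + 2 * ((t : ℤ) - m)) ∧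
      (e ≤ 1 ∨ 2 ^ (e - 2) + e ≤ m) := by
  intro t
  induction t with
  | zero =>
      refine ⟨0, 0, le_refl _, le_refl _, ?_, ?_, Or.inl (by norm_num)⟩ <;>
      · rw [burnSet_zero hv0]
        rintro p rfl
        simp
  | succ t ih =>
      obtain ⟨e, m, hem, hmt, hA, hB, hC⟩ := ih
      have hsub := burn_sub hV hact hv0 t
      have hnb1 := nbhd_bound (V := V) (v := v) (t := t) (M := (t : ℤ) + e) hA
      have hnbtop := nbhd_top (V := V) (v := v) (t := t) (M := (t : ℤ) + e) hA
      rcases hv : v (t + 1) with _ | a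
      · -- no activation
        refine ⟨e, m, hem, by omega, ?_, ?_, hC⟩
        · rintro p hp
          rw [burnSet_succ, hv] at hp
          simp only [Option.elim_none, Set.union_empty] at hp
          have := hnb1 p hp
          push_cast
          omega
        · rintro p hp hps
          rw [burnSet_succ, hv] at hp
          simp only [Option.elim_none, Set.union_empty] at hp
          push_cast at hps
          obtain ⟨b, hb, hbs, hble⟩ := hnbtop p hp (by omega)
          have := hB b hb hbs
          push_cast
          omega
      · -- activation a
        have haV : a ∈ V (t + 1) := hact _ _ hv
        have haQ : a ∈ quadGrid (t + 1) := by rw [hV] at haV; exact_mod_cast haV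
        have ha0 := haQ 0
        have ha1 := haQ 1
        have hna : norm1 a = a 0 + a 1 := norm1_of_quad haQ
        -- the reference point y₀ = (e+1, t+1)
        set y₀ : Pt 2 := ![(e : ℤ) + 1, (t : ℤ) + 1] with hy₀
        have hy₀0 : y₀ 0 = (e : ℤ) + 1 := rfl
        have hy₀1 : y₀ 1 = (t : ℤ) + 1 := rfl
        have het : (e : ℤ) ≤ t := by exact_mod_cast hem.trans hmt
        have hy₀V : y₀ ∈ V (t + 1) := by
          rw [hV, mem_quad, hy₀0, hy₀1]
          push_cast
          constructor <;> constructor <;> omega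
        have hy₀nb : y₀ ∉ nbhd (V (t + 1)) (burnSet V v t) := by
          rintro (h | ⟨-, b, hb, hd⟩)
          · have := hA y₀ h
            rw [hy₀0, hy₀1] at this
            omega
          · have := hA b hb
            rcases adj_cases hd with ⟨h0, h1⟩ | ⟨h0, h1⟩ | ⟨h0, h1⟩ | ⟨h0, h1⟩ <;>
              rw [hy₀0] at h0 <;> rw [hy₀1] at h1 <;> omega
        have hny₀ : norm1 y₀ = (t : ℤ) + e + 2 := by
          rw [norm1_two, hy₀0, hy₀1,
            abs_of_nonneg (by positivity : (0:ℤ) ≤ (e:ℤ) + 1),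
            abs_of_nonneg (by positivity : (0:ℤ) ≤ (t:ℤ) + 1)]
          ring
        have hcmp := hnearest t a hv y₀ hy₀V hy₀nb
        rw [hna, hny₀] at hcmp
        by_cases hlt : a 0 + a 1 ≤ (t : ℤ) + e + 1
        · -- no jump
          refine ⟨e, m, hem, by omega, ?_, ?_, hC⟩
          · rintro p hp
            rw [burnSet_succ, hv] at hp
            rcases hp with hp | hp
            · have := hnb1 p hp; push_cast; omega
            · simp only [Option.elim_some, Set.mem_singleton_iff] at hp
              rw [hp]; push_cast; omega
          · rintro p hp hps
            push_cast at hps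
            rw [burnSet_succ, hv] at hp
            rcases hp with hp | hp
            · obtain ⟨b, hb, hbs, hble⟩ := hnbtop p hp (by omega)
              have := hB b hb hbs
              push_cast
              omega
            · simp only [Option.elim_some, Set.mem_singleton_iff] at hp
              rw [hp] at hps ⊢
              -- now a 0 + a 1 = t + 1 + e
              by_cases hae : a 0 ≤ (e : ℤ)
              · push_cast; omega
              · -- topmost argument: z = (a0 - 1, a1 + 1)
                set z : Pt 2 := ![a 0 - 1, a 1 + 1] with hz
                have hz0 : z 0 = a 0 - 1 := rfl
                have hz1 : z 1 = a 1 + 1 := rfl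
                have hzQ : z ∈ quadGrid ((t : ℤ) + 1) := by
                  rw [mem_quad, hz0, hz1]
                  constructor <;> constructor <;> omega
                have hzV : z ∈ V (t + 1) := by rw [hV]; exact_mod_cast hzQ
                have hznb : z ∈ nbhd (V (t + 1)) (burnSet V v t) := by
                  by_contra hzn
                  rcases hnearest t a hv z hzV hzn with h | ⟨-, h⟩
                  · rw [hna, norm1_of_quad hzQ, hz0, hz1] at h
                    omega
                  · rw [hz1] at h; omega
                rcases hznb with hzB | ⟨-, b, hb, hd⟩
                · have := hA z hzB
                  rw [hz0, hz1] at this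
                  omega
                · have hbA := hA b hb
                  push_cast
                  rcases adj_cases hd with ⟨h0, h1⟩ | ⟨h0, h1⟩ | ⟨h0, h1⟩ | ⟨h0, h1⟩ <;>
                    rw [hz0] at h0 <;> rw [hz1] at h1
                  · omega
                  · have := hB b hb (by omega)
                    omega
                  · omega
                  · have := hB b hb (by omega)
                    omega
        · -- jump: a 0 + a 1 = t + e + 2
          have haeq : a 0 + a 1 = (t : ℤ) + e + 2 := by
            rcases hcmp with h | ⟨h1, h2⟩ <;> omega
          -- the witness (t, e) is burned
          have hwB : ∀ _ : 1 ≤ e, (∃ b ∈ burnSet V v t, b 0 = (t : ℤ) ∧ b 1 = (e : ℤ)) ∧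
              2 * (m : ℤ) ≤ (t : ℤ) + e := by
            intro hE
            set w : Pt 2 := ![(t : ℤ) + 1, (e : ℤ)] with hw
            have hw0 : w 0 = (t : ℤ) + 1 := rfl
            have hw1 : w 1 = (e : ℤ) := rfl
            have hwQ : w ∈ quadGrid ((t : ℤ) + 1) := by
              rw [mem_quad, hw0, hw1]
              constructor <;> constructor <;> omega
            have hwV : w ∈ V (t + 1) := by rw [hV]; exact_mod_cast hwQ
            have hwnb : w ∈ nbhd (V (t + 1)) (burnSet V v t) := by
              by_contra hwn
              rcases hnearest t a hv w hwV hwn with h | ⟨h, -⟩ <;>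
                rw [hna, norm1_of_quad hwQ, hw0, hw1] at h <;> omega
            rcases hwnb with hwBt | ⟨-, b, hb, hd⟩
            · have := (hsub hwBt) 0
              rw [hw0] at this
              omega
            · have hbQ := hsub hb
              have hb0 := hbQ 0
              have hb1 := hbQ 1
              have hbc : b 0 = (t : ℤ) ∧ b 1 = (e : ℤ) := by
                rcases adj_cases hd with ⟨h0, h1⟩ | ⟨h0, h1⟩ | ⟨h0, h1⟩ | ⟨h0, h1⟩ <;>
                  rw [hw0] at h0 <;> rw [hw1] at h1 <;> constructor <;> omega
              have hkey := hB b hb (by omega)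
              exact ⟨⟨b, hb, hbc⟩, by omega⟩
          refine ⟨e + 1, t + 1, by omega, le_refl _, ?_, ?_, ?_⟩
          · rintro p hp
            rw [burnSet_succ, hv] at hp
            rcases hp with hp | hp
            · have := hnb1 p hp; push_cast; omega
            · simp only [Option.elim_some, Set.mem_singleton_iff] at hp
              rw [hp]; push_cast; omega
          · rintro p hp hps
            push_cast at hps
            rw [burnSet_succ, hv] at hp
            rcases hp with hp | hp
            · have := hnb1 p hp; omega
            · simp only [Option.elim_some, Set.mem_singleton_iff] at hp
              rw [hp]
              have ha1' : a 1 = (t : ℤ) + 1 := by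
                rcases hcmp with h | ⟨h1, h2⟩
                · omega
                · rw [hy₀1] at h2; omega
              push_cast
              omega
          · -- the exponential lower bound on the new jump time
            rcases Nat.lt_or_ge e 1 with he0 | he1
            · left; omega
            right
            obtain ⟨⟨b, hbmem, hbc0, hbc1⟩, hkey⟩ := hwB he1
            rcases Nat.lt_or_ge e 2 with he1' | he2
            · -- e = 1 : need t ≥ 2
              have he : e = 1 := by omega
              have ht2 : 2 ≤ t := by
                by_contra ht
                have hm1 : m = 1 := by omega
                have ht1 : t = 1 := by omega
                have hv1 : v 1 = none := by
                  rcases hskip with h | h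
                  · exact h
                  · rw [ht1] at hv
                    rw [h] at hv; exact absurd hv (by simp)
                have hbmem' : b ∈ burnSet V v 1 := by rw [← ht1]; exact hbmem
                rw [burnSet_succ, hv1, burnSet_zero hv0] at hbmem'
                simp only [Option.elim_none, Set.union_empty] at hbmem'
                rcases hbmem' with h | ⟨-, b', hb', hd⟩
                · rw [Set.mem_singleton_iff] at h
                  have := congrFun h 0
                  rw [hbc0] at this
                  simp [ht1] at this
                · rw [Set.mem_singleton_iff] at hb'
                  rw [hb', dist1_two, hbc0, hbc1] at hd
                  simp only [Pi.zero_apply, sub_zero] at hd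
                  rw [abs_of_nonneg (by positivity : (0:ℤ) ≤ (t:ℤ)),
                    abs_of_nonneg (by positivity : (0:ℤ) ≤ (e:ℤ))] at hd
                  have : t + e = 1 := by exact_mod_cast hd
                  omega
              rw [he]
              norm_num
              omega
            · -- e ≥ 2
              rcases hC with h | hC'
              · omega
              have hpow : 2 ^ (e + 1 - 2) = 2 * 2 ^ (e - 2) := by
                have h2 : e + 1 - 2 = (e - 2) + 1 := by omega
                rw [h2, pow_succ]
                ring
              rw [hpow]
              have hCz : (2 : ℤ) ^ (e - 2) + e ≤ m := by exact_mod_cast hC'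
              have hfin : 2 * ((2 : ℤ) ^ (e - 2)) + (e + 1) ≤ (t : ℤ) + 1 := by omega
              exact_mod_cast hfin

end Burning

namespace Burning

/-- per-diagonal bounds -/
lemma diag_card_le (n s : ℕ) :
    ((Finset.HasAntidiagonal.antidiagonal s).filter (fun q => q.1 ≤ n)).card ≤ min (s + 1) (n + 1) := by
  refine le_min ?_ ?_
  · exact le_trans (Finset.card_filter_le _ _) (by rw [Finset.Nat.card_antidiagonal])
  · have : ((Finset.HasAntidiagonal.antidiagonal s).filter (fun q => q.1 ≤ n)).card ≤
        (Finset.range (n + 1)).card := by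
      apply Finset.card_le_card_of_injOn (fun q => q.1)
      · intro q hq
        simp only [Finset.coe_filter, Finset.mem_coe, Finset.mem_filter, Set.mem_setOf_eq] at hq
        exact Finset.mem_range.mpr (show q.1 < n + 1 by omega)
      · intro q hq q' hq' hqq
        simp only [Finset.coe_filter, Set.mem_setOf_eq, Finset.HasAntidiagonal.mem_antidiagonal] at hq hq'
        have h1 : q.1 = q'.1 := hqq
        exact Prod.ext h1 (by omega)
    rwa [Finset.card_range] at this

lemma count_le (n e : ℕ) (S : Set (Pt 2)) (hS : S ⊆ quadGrid n)
    (hA : ∀ p ∈ S, p 0 + p 1 ≤ (n : ℤ) + e) :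
    S.ncard ≤ (∑ s ∈ Finset.range (n + 1), (s + 1)) + e * (n + 1) := by
  classical
  set f : Pt 2 → ℕ × ℕ := fun p => ((p 0).toNat, (p 1).toNat) with hf
  set F : Finset (ℕ × ℕ) :=
    (Finset.range (n + 1 + e)).biUnion
      (fun s => (Finset.HasAntidiagonal.antidiagonal s).filter (fun q => q.1 ≤ n)) with hF
  have him : f '' S ⊆ ↑F := by
    rintro q ⟨p, hp, rfl⟩
    have hQ := hS hp
    have h0 := hQ 0
    have h1 := hQ 1
    have hsum := hA p hp
    simp only [hF, Finset.coe_biUnion, Set.mem_iUnion, Finset.mem_coe, Finset.mem_filter,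
      Finset.HasAntidiagonal.mem_antidiagonal, Finset.mem_range]
    refine ⟨(p 0).toNat + (p 1).toNat, ?_, rfl, ?_⟩
    · omega
    · show (p 0).toNat ≤ n
      omega
  have hinj : Set.InjOn f S := by
    intro p hp q hq hpq
    have hp0 := (hS hp) 0
    have hp1 := (hS hp) 1
    have hq0 := (hS hq) 0
    have hq1 := (hS hq) 1
    simp only [hf, Prod.mk.injEq] at hpq
    refine pt_ext ?_ ?_ <;> omega
  have h1 : S.ncard = (f '' S).ncard := (Set.ncard_image_of_injOn hinj).symm
  have h2 : (f '' S).ncard ≤ F.card := by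
    rw [← Set.ncard_coe_finset]
    exact Set.ncard_le_ncard him F.finite_toSet
  have h3 : F.card ≤ ∑ s ∈ Finset.range (n + 1 + e),
      ((Finset.HasAntidiagonal.antidiagonal s).filter (fun q => q.1 ≤ n)).card :=
    Finset.card_biUnion_le
  have h4 : ∀ e' : ℕ, (∑ s ∈ Finset.range (n + 1 + e'),
      ((Finset.HasAntidiagonal.antidiagonal s).filter (fun q => q.1 ≤ n)).card) ≤
      (∑ s ∈ Finset.range (n + 1), (s + 1)) + e' * (n + 1) := by
    intro e'
    induction e' with
    | zero =>
        simp only [Nat.add_zero, Nat.zero_mul]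
        exact le_trans (Finset.sum_le_sum (fun s _ => (diag_card_le n s).trans (min_le_left _ _)))
          (by omega)
    | succ e' ih =>
        rw [show n + 1 + (e' + 1) = (n + 1 + e') + 1 by omega, Finset.sum_range_succ]
        have := (diag_card_le n (n + 1 + e')).trans (min_le_right _ _)
        calc _ ≤ ((∑ s ∈ Finset.range (n + 1), (s + 1)) + e' * (n + 1)) + (n + 1) := by omega
        _ = _ := by ring
  have := h4 e
  omega

end Burning

namespace Burning

lemma gauss (n : ℕ) : 2 * (∑ s ∈ Finset.range (n + 1), (s + 1)) = (n + 1) * (n + 2) := by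
  induction n with
  | zero => norm_num
  | succ n ih =>
      rw [Finset.sum_range_succ, Nat.mul_add, ih]
      ring

end Burning

open Burning in
/-- in the quadrant grids `Q_n = [0, n]²`, for a valid activator
sequence starting at the origin, skipping time `1` or `2`, and always activating
an unburned vertex nearest the origin with greatest `y`-coordinate, the burned
set satisfies `|B_n| ≤ (n+2)(n+1)/2 + (2 + log₂ n)(n+1)`. -/
theorem stmt4 (V : ℕ → Set (Pt 2)) (hV : ∀ n : ℕ, V n = quadGrid n)
    (v : ℕ → Option (Pt 2))
    (hact : IsActivator V v) (hvalid : IsValid V v)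
    (hv0 : v 0 = some 0)
    (hskip : v 1 = none ∨ v 2 = none)
    (hnearest : ∀ n : ℕ, ∀ x, v (n + 1) = some x →
      ∀ y ∈ V (n + 1), y ∉ nbhd (V (n + 1)) (burnSet V v n) →
        norm1 x < norm1 y ∨ (norm1 x = norm1 y ∧ y 1 ≤ x 1)) :
    ∀ n : ℕ, 1 ≤ n →
      ((burnSet V v n).ncard : ℝ) ≤
        ((n : ℝ) + 2) * ((n : ℝ) + 1) / 2 + (2 + Real.logb 2 n) * ((n : ℝ) + 1) := by
  intro n hn
  obtain ⟨e, m, hem, hmn, hA, hB, hC⟩ := invariant V hV v hact hv0 hskip hnearest n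
  have hsub := burn_sub hV hact hv0 n
  have hcount := count_le n e (burnSet V v n) hsub hA
  set G := ∑ s ∈ Finset.range (n + 1), (s + 1) with hG
  have hGr : (G : ℝ) = ((n : ℝ) + 1) * ((n : ℝ) + 2) / 2 := by
    have := gauss n
    have : (2 : ℝ) * G = ((n : ℝ) + 1) * ((n : ℝ) + 2) := by exact_mod_cast this
    linarith
  -- bound on e
  have hlog : (e : ℝ) ≤ 2 + Real.logb 2 n := by
    have hn1 : (1 : ℝ) ≤ (n : ℝ) := by exact_mod_cast hn
    have hlognn : 0 ≤ Real.logb 2 (n : ℝ) := Real.logb_nonneg one_lt_two hn1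
    rcases le_or_gt e 2 with h | h
    · have : (e : ℝ) ≤ 2 := by exact_mod_cast h
      linarith
    · have h2n : 2 ^ (e - 2) ≤ n := by
        rcases hC with hc | hc
        · omega
        · omega
      have h2r : ((2 : ℝ)) ^ (e - 2) ≤ (n : ℝ) := by exact_mod_cast h2n
      have hpos : (0 : ℝ) < (2 : ℝ) ^ (e - 2) := by positivity
      have hle : Real.logb 2 ((2 : ℝ) ^ (e - 2)) ≤ Real.logb 2 (n : ℝ) :=
        Real.logb_le_logb_of_le one_lt_two hpos h2r
      rw [Real.logb_pow, Real.logb_self_eq_one (by norm_num : (1:ℝ) < 2)] at hle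
      have hcast : ((e - 2 : ℕ) : ℝ) = (e : ℝ) - 2 := by
        have : 2 ≤ e := by omega
        push_cast [this]
        ring
      rw [hcast, mul_one] at hle
      linarith
  -- finish
  have hmain : ((burnSet V v n).ncard : ℝ) ≤ (G : ℝ) + (e : ℝ) * ((n : ℝ) + 1) := by
    have : ((burnSet V v n).ncard : ℝ) ≤ ((G + e * (n + 1) : ℕ) : ℝ) := by
      exact_mod_cast hcount
    push_cast at this
    linarith
  have hnpos : (0 : ℝ) ≤ (n : ℝ) + 1 := by positivity
  have := mul_le_mul_of_nonneg_right hlog hnpos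
  calc ((burnSet V v n).ncard : ℝ) ≤ (G : ℝ) + (e : ℝ) * ((n : ℝ) + 1) := hmain
    _ ≤ ((n : ℝ) + 1) * ((n : ℝ) + 2) / 2 + (2 + Real.logb 2 n) * ((n : ℝ) + 1) := by
        rw [hGr]; linarith
    _ = ((n : ℝ) + 2) * ((n : ℝ) + 1) / 2 + (2 + Real.logb 2 n) * ((n : ℝ) + 1) := by ring
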